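/- In the interleaved Reed–Solomon decoding setup, fix positive integers s ≤ ℓ and an integer τ ≥ deg Λ. Define Λ_i := Λ^{s-|i|}·Ω^i for i ∈ ℕ^m with |i| < s, Ψ_j := Λ^s·f^j for j ∈ ℕ^m with 1 ≤ |j| ≤ ℓ, and A_{i,j} := C(j,i)·R^{j-i}·G^{|i|}. Then: (1) deg Λ_i < τs - |i| + 1 for all |i| < s; (2) deg Ψ_j < τs + |j|(k-1) + 1 for all 1 ≤ |j| ≤ ℓ; and (3) for every j with 1 ≤ |j| ≤ ℓ, Σ_{i ⪯ j, |i| < s} Λ_i·A_{i,j} ≡ Ψ_j (mod G_j), where G_j := x^{τs + |j|(n-1) + 1} if |j| < s and G_j := G^s if |j| ≥ s. -/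

import Mathlib

/-!
Since `Λ ∣ G`, write `G = Λ * M`; cancelling `Λ` in the key equation `Ω_t * G = Λ * (f_t - R_t)`
gives `f_t = Ω_t * M + R_t`. Expanding `Λ^s f^j = Λ^s ∏ (Ω_t M + R_t)^{j_t}` binomially in each
coordinate, the terms with `|i| < s` are exactly the `Λ_i A_{i,j}`, because
`Λ^s M^{|i|} = Λ^{s-|i|} G^{|i|}`, while every term with `|i| ≥ s` contains `Λ^s M^s = G^s`;
when `|j| < s` there are no such terms at all. The degree bounds come from `deg Ω_t < deg Λ ≤ τ`,
which the key equation forces because `deg (f_t - R_t) < n = deg G`.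
-/

open Polynomial Finset

theorem prod_add_pow_eq_sum_Iic {P ι : Type*} [CommSemiring P] [Fintype ι] [DecidableEq ι]
    (a b : ι → P) (j : ι → ℕ) :
    ∏ t, (a t + b t) ^ j t =
      ∑ i ∈ Iic j, ((∏ t, (j t).choose (i t) : ℕ) : P) *
        ((∏ t, a t ^ i t) * ∏ t, b t ^ (j t - i t)) := by
  calc ∏ t, (a t + b t) ^ j t
      = ∏ t, ∑ i ∈ Iic (j t), a t ^ i * b t ^ (j t - i) * ((j t).choose i : P) := by
        simp_rw [add_pow, Nat.range_succ_eq_Iic]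
    _ = ∑ i ∈ Iic j, ∏ t, a t ^ i t * b t ^ (j t - i t) * ((j t).choose (i t) : P) :=
        prod_univ_sum _ _
    _ = _ := sum_congr rfl fun i _ => by
        rw [prod_mul_distrib, prod_mul_distrib, Nat.cast_prod]; ring

section KeyEquation

variable {P ι : Type*} [CommRing P] [Fintype ι] [DecidableEq ι]
  (Λ M : P) (Ω R : ι → P) (s : ℕ) (j : ι → ℕ)

theorem pow_mul_prod_mul_add_pow_eq_sum :
    Λ ^ s * ∏ t, (Ω t * M + R t) ^ j t =
      ∑ i ∈ Iic j, ((∏ t, (j t).choose (i t) : ℕ) : P) *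
        (Λ ^ s * M ^ (∑ t, i t) * (∏ t, Ω t ^ i t) * ∏ t, R t ^ (j t - i t)) := by
  rw [prod_add_pow_eq_sum_Iic, mul_sum]
  refine sum_congr rfl fun i _ => ?_
  simp_rw [mul_pow]
  rw [prod_mul_distrib, prod_pow_eq_pow_sum]
  ring

theorem sum_filter_lt_sub_pow_mul_prod_eq :
    ∑ i ∈ (Iic j).filter (fun i => ∑ t, i t < s),
        (Λ ^ (s - ∑ t, i t) * ∏ t, Ω t ^ i t) *
          (((∏ t, (j t).choose (i t) : ℕ) : P) * (∏ t, R t ^ (j t - i t)) *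
            (Λ * M) ^ (∑ t, i t)) -
      Λ ^ s * ∏ t, (Ω t * M + R t) ^ j t =
    -∑ i ∈ (Iic j).filter (fun i => ¬∑ t, i t < s), ((∏ t, (j t).choose (i t) : ℕ) : P) *
        (Λ ^ s * M ^ (∑ t, i t) * (∏ t, Ω t ^ i t) * ∏ t, R t ^ (j t - i t)) := by
  have low_order : ∑ i ∈ (Iic j).filter (fun i => ∑ t, i t < s),
        (Λ ^ (s - ∑ t, i t) * ∏ t, Ω t ^ i t) *
          (((∏ t, (j t).choose (i t) : ℕ) : P) * (∏ t, R t ^ (j t - i t)) *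
            (Λ * M) ^ (∑ t, i t)) =
      ∑ i ∈ (Iic j).filter (fun i => ∑ t, i t < s), ((∏ t, (j t).choose (i t) : ℕ) : P) *
        (Λ ^ s * M ^ (∑ t, i t) * (∏ t, Ω t ^ i t) * ∏ t, R t ^ (j t - i t)) := by
    refine sum_congr rfl fun i hi => ?_
    rw [← pow_sub_mul_pow Λ (mem_filter.1 hi).2.le, mul_pow]
    ring
  rw [low_order, pow_mul_prod_mul_add_pow_eq_sum,
    ← sum_filter_add_sum_filter_not (Iic j) (fun i => ∑ t, i t < s), sub_add_cancel_left]

variable {Λ M Ω R s j} {G : P} {f : ι → P}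

theorem pow_dvd_sum_filter_lt_sub_pow_mul_prod (hG : G = Λ * M)
    (hf : ∀ t, f t = Ω t * M + R t) :
    G ^ s ∣ ∑ i ∈ (Iic j).filter (fun i => ∑ t, i t < s),
        (Λ ^ (s - ∑ t, i t) * ∏ t, Ω t ^ i t) *
          (((∏ t, (j t).choose (i t) : ℕ) : P) * (∏ t, R t ^ (j t - i t)) * G ^ (∑ t, i t)) -
      Λ ^ s * ∏ t, f t ^ j t := by
  obtain rfl : f = fun t => Ω t * M + R t := funext hf
  subst hG
  rw [sum_filter_lt_sub_pow_mul_prod_eq, dvd_neg]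
  refine dvd_sum fun i hi => ?_
  have hΛM : (Λ * M) ^ s ∣ Λ ^ s * M ^ (∑ t, i t) := by
    rw [mul_pow]
    exact mul_dvd_mul_left _ (pow_dvd_pow M (not_lt.1 (mem_filter.1 hi).2))
  exact ((hΛM.mul_right _).mul_right _).mul_left _

theorem sum_filter_lt_sub_pow_mul_prod_eq_zero (hG : G = Λ * M)
    (hf : ∀ t, f t = Ω t * M + R t) (hj : ∑ t, j t < s) :
    ∑ i ∈ (Iic j).filter (fun i => ∑ t, i t < s),
        (Λ ^ (s - ∑ t, i t) * ∏ t, Ω t ^ i t) *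
          (((∏ t, (j t).choose (i t) : ℕ) : P) * (∏ t, R t ^ (j t - i t)) * G ^ (∑ t, i t)) -
      Λ ^ s * ∏ t, f t ^ j t = 0 := by
  obtain rfl : f = fun t => Ω t * M + R t := funext hf
  subst hG
  rw [sum_filter_lt_sub_pow_mul_prod_eq, filter_false_of_mem, sum_empty, neg_zero]
  intro i hi
  exact not_not.2 ((sum_le_sum fun t _ => mem_Iic.1 hi t).trans_lt hj)

end KeyEquation

theorem natDegree_prod_pow_add_sum_le {R ι : Type*} [CommSemiring R] [Fintype ι]
    {p : ι → R[X]} {i : ι → ℕ} {d : ℕ} (hp : ∀ t, p t ≠ 0 → (p t).natDegree < d)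
    (hprod : ∏ t, p t ^ i t ≠ 0) :
    (∏ t, p t ^ i t).natDegree + ∑ t, i t ≤ (∑ t, i t) * d := by
  have factor_le : ∀ t, (p t ^ i t).natDegree + i t ≤ i t * d := by
    intro t
    rcases Nat.eq_zero_or_pos (i t) with hi | hi
    · simp [hi]
    have hpt : p t ≠ 0 :=
      ne_zero_pow hi.ne' fun h => hprod (prod_eq_zero (mem_univ t) h)
    calc (p t ^ i t).natDegree + i t ≤ i t * (p t).natDegree + i t :=
          Nat.add_le_add_right natDegree_pow_le _
      _ = i t * ((p t).natDegree + 1) := by ring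
      _ ≤ i t * d := Nat.mul_le_mul_left _ (hp t hpt)
  calc (∏ t, p t ^ i t).natDegree + ∑ t, i t
      ≤ ∑ t, ((p t ^ i t).natDegree + i t) := by
        rw [sum_add_distrib]; exact Nat.add_le_add_right (natDegree_prod_le _ _) _
    _ ≤ ∑ t, i t * d := sum_le_sum fun t _ => factor_le t
    _ = (∑ t, i t) * d := (sum_mul _ _ _).symm

theorem natDegree_lt_of_mul_eq_mul {R : Type*} [CommRing R] [NoZeroDivisors R]
    {a g l b : R[X]} (h : a * g = l * b) (hb : b.degree < g.degree) (ha : a ≠ 0) :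
    a.natDegree < l.natDegree := by
  have hg : g ≠ 0 := ne_zero_of_degree_gt hb
  have hlb : l * b ≠ 0 := h ▸ mul_ne_zero ha hg
  have hdeg := congrArg natDegree h
  rw [natDegree_mul ha hg, natDegree_mul (left_ne_zero_of_mul hlb) (right_ne_zero_of_mul hlb)]
    at hdeg
  have := natDegree_lt_natDegree (right_ne_zero_of_mul hlb) hb
  omega

theorem pade_solution_of_key_equations_general (F : Type*) [Field F]
    (n k m : ℕ) (hk : k < n)
    (α : Fin n → F)
    (f : Fin m → Polynomial F) (hf : ∀ t, (f t).degree < (k : ℕ))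
    (E : Finset (Fin n))
    (Λ : Polynomial F) (hΛ : Λ = ∏ i ∈ E, (X - C (α i)))
    (G : Polynomial F) (hG : G = ∏ i : Fin n, (X - C (α i)))
    (R : Fin m → Polynomial F) (hRdeg : ∀ t, (R t).degree < (n : ℕ))
    (Ω : Fin m → Polynomial F) (hΩ : ∀ t, Ω t * G = Λ * (f t - R t))
    (s ℓ τ : ℕ) (hτ : Λ.natDegree ≤ τ) :
    (∀ i : Fin m → ℕ, ∑ t, i t < s →
      Λ ^ (s - ∑ t, i t) * ∏ t, Ω t ^ i t ≠ 0 →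
      ((Λ ^ (s - ∑ t, i t) * ∏ t, Ω t ^ i t).natDegree : ℤ) <
        (τ : ℤ) * s - (∑ t, i t) + 1) ∧
    (∀ j : Fin m → ℕ, 1 ≤ ∑ t, j t → ∑ t, j t ≤ ℓ →
      Λ ^ s * ∏ t, f t ^ j t ≠ 0 →
      ((Λ ^ s * ∏ t, f t ^ j t).natDegree : ℤ) <
        (τ : ℤ) * s + (∑ t, j t) * ((k : ℤ) - 1) + 1) ∧
    (∀ j : Fin m → ℕ, 1 ≤ ∑ t, j t → ∑ t, j t ≤ ℓ →
      (if (∑ t, j t) < s then (X : Polynomial F) ^ (τ * s + (∑ t, j t) * (n - 1) + 1)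
        else G ^ s) ∣
        (∑ i ∈ (Finset.Iic j).filter (fun i => ∑ t, i t < s),
          (Λ ^ (s - ∑ t, i t) * ∏ t, Ω t ^ i t) *
            (((∏ t, (j t).choose (i t) : ℕ) : Polynomial F) *
              (∏ t, R t ^ (j t - i t)) * G ^ (∑ t, i t)) -
          Λ ^ s * ∏ t, f t ^ j t)) := by
  have hΛ0 : Λ ≠ 0 := hΛ ▸ (monic_prod_of_monic _ _ fun i _ => monic_X_sub_C _).ne_zero
  have hGdeg : G.degree = n := by rw [hG, degree_prod]; simp
  have hfdeg : ∀ t, f t ≠ 0 → (f t).natDegree < k := fun t hft =>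
    (natDegree_lt_iff_degree_lt hft).2 (hf t)
  have hΩdeg : ∀ t, Ω t ≠ 0 → (Ω t).natDegree < τ := fun t hΩt => by
    have hfR : (f t - R t).degree < G.degree := hGdeg ▸ (degree_sub_le _ _).trans_lt
      (max_lt ((hf t).trans_le (by exact_mod_cast hk.le)) (hRdeg t))
    exact (natDegree_lt_of_mul_eq_mul (hΩ t) hfR hΩt).trans_le hτ
  obtain ⟨M, hGM⟩ : Λ ∣ G := hΛ ▸ hG ▸ prod_dvd_prod_of_subset _ _ _ (subset_univ E)
  have hfM : ∀ t, f t = Ω t * M + R t := fun t => by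
    have hcancel : Λ * (Ω t * M) = Λ * (f t - R t) := by rw [← hΩ t, hGM]; ring
    exact sub_eq_iff_eq_add.1 (mul_left_cancel₀ hΛ0 hcancel).symm
  refine ⟨fun i hi hne => ?_, fun j _ _ hne => ?_, fun j _ _ => ?_⟩
  · have hmul := natDegree_mul_le_of_le (natDegree_pow_le_of_le (s - ∑ t, i t) hτ)
      (le_refl (∏ t, Ω t ^ i t).natDegree)
    have hprod := natDegree_prod_pow_add_sum_le hΩdeg (right_ne_zero_of_mul hne)
    zify [hi.le] at hmul hprod
    push_cast
    linarith
  · have hmul := natDegree_mul_le_of_le (natDegree_pow_le_of_le s hτ)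
      (le_refl (∏ t, f t ^ j t).natDegree)
    have hprod := natDegree_prod_pow_add_sum_le hfdeg (right_ne_zero_of_mul hne)
    zify at hmul hprod
    push_cast
    linarith
  · split_ifs with hjs
    · rw [sum_filter_lt_sub_pow_mul_prod_eq_zero hGM hfM hjs]
      exact dvd_zero _
    · exact pow_dvd_sum_filter_lt_sub_pow_mul_prod hGM hfM

/-- Proposition 1 of the paper: in the interleaved Reed–Solomon decoding setup with
parameters `s ≤ ℓ` and `τ ≥ deg Λ`, the tuple `Λ_i := Λ^{s-|i|}·Ω^i`,
`Ψ_j := Λ^s·f^j` is a solution of the simultaneous Hermite–Padé approximation with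
inputs `A_{i,j} := C(j,i)·R^{j-i}·G^{|i|}`: the degree bounds
`deg Λ_i < τs - |i| + 1` and `deg Ψ_j < τs + |j|(k-1) + 1` hold, and
`∑_{i ⪯ j, |i| < s} Λ_i·A_{i,j} ≡ Ψ_j (mod G_j)`, where `G_j = x^{τs+|j|(n-1)+1}` if
`|j| < s` and `G_j = G^s` otherwise. -/
theorem pade_solution_of_key_equations (F : Type*) [Field F] [Fintype F]
    (n k m : ℕ) (hk : k < n) (hm : 1 ≤ m)
    (α : Fin n → F) (hα : Function.Injective α)
    (f : Fin m → Polynomial F) (hf : ∀ t, (f t).degree < (k : ℕ))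
    (e : Fin m → Fin n → F)
    (E : Finset (Fin n)) (hE : ∀ i, i ∈ E ↔ ∃ t, e t i ≠ 0)
    (Λ : Polynomial F) (hΛ : Λ = ∏ i ∈ E, (X - C (α i)))
    (G : Polynomial F) (hG : G = ∏ i : Fin n, (X - C (α i)))
    (R : Fin m → Polynomial F) (hRdeg : ∀ t, (R t).degree < (n : ℕ))
    (hR : ∀ t i, (R t).eval (α i) = (f t).eval (α i) + e t i)
    (Ω : Fin m → Polynomial F) (hΩ : ∀ t, Ω t * G = Λ * (f t - R t))
    (s ℓ τ : ℕ) (hs : 0 < s) (hsℓ : s ≤ ℓ) (hτ : Λ.natDegree ≤ τ) :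
    (∀ i : Fin m → ℕ, ∑ t, i t < s →
      Λ ^ (s - ∑ t, i t) * ∏ t, Ω t ^ i t ≠ 0 →
      ((Λ ^ (s - ∑ t, i t) * ∏ t, Ω t ^ i t).natDegree : ℤ) <
        (τ : ℤ) * s - (∑ t, i t) + 1) ∧
    (∀ j : Fin m → ℕ, 1 ≤ ∑ t, j t → ∑ t, j t ≤ ℓ →
      Λ ^ s * ∏ t, f t ^ j t ≠ 0 →
      ((Λ ^ s * ∏ t, f t ^ j t).natDegree : ℤ) <
        (τ : ℤ) * s + (∑ t, j t) * ((k : ℤ) - 1) + 1) ∧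
    (∀ j : Fin m → ℕ, 1 ≤ ∑ t, j t → ∑ t, j t ≤ ℓ →
      (if (∑ t, j t) < s then (X : Polynomial F) ^ (τ * s + (∑ t, j t) * (n - 1) + 1)
        else G ^ s) ∣
        (∑ i ∈ (Finset.Iic j).filter (fun i => ∑ t, i t < s),
          (Λ ^ (s - ∑ t, i t) * ∏ t, Ω t ^ i t) *
            (((∏ t, (j t).choose (i t) : ℕ) : Polynomial F) *
              (∏ t, R t ^ (j t - i t)) * G ^ (∑ t, i t)) -
          Λ ^ s * ∏ t, f t ^ j t)) :=
  pade_solution_of_key_equations_general F n k m hk α f hf E Λ hΛ G hG R hRdeg Ω hΩ s ℓ τ hτ
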